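/- arXiv:2605.31496 — 5 statements merged into one kernel-verified Lean document; each statement's English description precedes it below -/
import Mathlib

section
/- Let r ≥ 1 be an integer, let a = (a_1,…,a_r) ∈ [0,1]^r, extended by a_0 := 0 and a_m := 1 for m > r, and let 0 ≤ k ≤ r. Then for all real x and y: T_k(y)·S_r^{(a)}(x,y) − T_k(x)·S_r^{(a)}(x,y) = a_k·(T_k(y) − T_k(x)) + ∑_{j=1}^{r} (a_{j+k} − a_j)·(T_j(x)T_{j+k}(y) − T_{j+k}(x)T_j(y)) + (1/2)·∑_{j=1}^{k−1} (a_{k−j} − a_j)·(T_j(x)T_{k−j}(y) − T_{k−j}(x)T_j(y)). -/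
open Polynomial

/-- The k-th Chebyshev polynomial of the first kind over ℝ. -/
noncomputable def chebT (k : ℕ) : Polynomial ℝ := Polynomial.Chebyshev.T ℝ (k : ℤ)

/-- The kernel `S_r^{(a)}(x,y) = 1 + 2∑_{j=1}^r (1-a_j) T_j(x) T_j(y)`. -/
noncomputable def Sker (r : ℕ) (a : ℕ → ℝ) (x y : ℝ) : ℝ :=
  1 + 2 * ∑ j ∈ Finset.Icc 1 r, (1 - a j) * (chebT j).eval x * (chebT j).eval y

/-!
Write `B(m,n) = T_m(x) T_n(y) - T_n(x) T_m(y)`, antisymmetric in `(m,n)` and even in `n`.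
The product formula `2 T_j T_k = T_{j+k} + T_{j-k}` turns `(T_k(y) - T_k(x)) S_r^{(a)}(x,y)` into
`B(0,k) + ∑_j (1-a_j) (B(j,j+k) + B(j,j-k))`. In the second family the indices `j > k` are shifted
down by `k` and, since `1 - a_m = 0` for `m > r`, recombine with the first family into the terms
`(a_{j+k} - a_j) B(j,j+k)`; the index `j = k` gives `-(1-a_k) B(0,k)`, and the indices `j < k` are
symmetrised under `j ↦ k - j`, which accounts for the factor `1/2`.
-/

open Finset Polynomial.Chebyshev

section IntervalSums

variable {M : Type*} [AddCommMonoid M]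

lemma sum_Icc_one_sub_reflect (f : ℕ → M) (k : ℕ) :
    ∑ j ∈ Icc 1 (k - 1), f (k - j) = ∑ j ∈ Icc 1 (k - 1), f j :=
  sum_nbij' (k - ·) (k - ·) (fun j hj => by simp only [mem_Icc] at *; omega)
    (fun j hj => by simp only [mem_Icc] at *; omega)
    (fun j hj => by simp only [mem_Icc] at *; omega)
    (fun j hj => by simp only [mem_Icc] at *; omega) (fun _ _ => rfl)

lemma sum_Icc_one_eq_add_add_sum_Icc_succ (f : ℕ → M) {k r : ℕ} (hk : 1 ≤ k) (hkr : k ≤ r) :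
    ∑ j ∈ Icc 1 r, f j = ∑ j ∈ Icc 1 (k - 1), f j + f k + ∑ j ∈ Icc (k + 1) r, f j := by
  have hsplit : Icc 1 r = insert k (Icc 1 (k - 1)) ∪ Icc (k + 1) r := by
    ext j; simp only [mem_union, mem_insert, mem_Icc]; omega
  rw [hsplit, sum_union (disjoint_left.2 fun j h₁ h₂ => by simp only [mem_insert, mem_Icc] at *; omega),
    sum_insert (by simp only [mem_Icc]; omega), add_comm (f k)]

lemma sum_Icc_succ_eq_sum_Icc_one_add (f : ℕ → M) (k r : ℕ) (hf : ∀ j, r < j → f j = 0) :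
    ∑ j ∈ Icc (k + 1) r, f j = ∑ i ∈ Icc 1 r, f (i + k) := by
  calc ∑ j ∈ Icc (k + 1) r, f j = ∑ j ∈ Icc (1 + k) (r + k), f j :=
        sum_subset (Icc_subset_Icc (by omega) (by omega))
          fun j hj hj' => hf j (by simp only [mem_Icc] at hj hj'; omega)
    _ = ∑ i ∈ Icc 1 r, f (i + k) := by rw [← map_add_right_Icc, sum_map]; rfl

end IntervalSums

section ChebyshevMinor

variable {R : Type*} [CommRing R] (x y : R)

noncomputable def chebMinor (m n : ℤ) : R :=
  (T R m).eval x * (T R n).eval y - (T R n).eval x * (T R m).eval y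

lemma chebMinor_swap (m n : ℤ) : chebMinor x y n m = -chebMinor x y m n := by
  unfold chebMinor; ring

lemma chebMinor_neg_right (m n : ℤ) : chebMinor x y m (-n) = chebMinor x y m n := by
  simp only [chebMinor, T_neg]

lemma chebMinor_zero_left (n : ℤ) : chebMinor x y 0 n = (T R n).eval y - (T R n).eval x := by
  simp only [chebMinor, T_zero, eval_one]; ring

lemma chebMinor_sub_natCast {j k : ℕ} (hjk : j ≤ k) :
    chebMinor x y j ((j : ℤ) - k) = chebMinor x y j ↑(k - j) := by
  rw [← chebMinor_neg_right, neg_sub, Nat.cast_sub hjk]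

lemma two_mul_eval_T_mul_eval_T (z : R) (m n : ℤ) :
    2 * (T R m).eval z * (T R n).eval z = (T R (m + n)).eval z + (T R (m - n)).eval z := by
  simpa using congrArg (eval z) (T_mul_T R m n)

lemma eval_T_sub_mul_two_mul_eval_T (j k : ℤ) :
    ((T R k).eval y - (T R k).eval x) * (2 * (T R j).eval x * (T R j).eval y) =
      chebMinor x y j (j + k) + chebMinor x y j (j - k) := by
  unfold chebMinor
  linear_combination (T R j).eval x * two_mul_eval_T_mul_eval_T y j k -
    (T R j).eval y * two_mul_eval_T_mul_eval_T x j k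

end ChebyshevMinor

section ChebyshevKernel

variable {R : Type*} [CommRing R] (x y : R)

lemma eval_T_sub_mul_kernel (a : ℕ → R) (r k : ℕ) :
    ((T R k).eval y - (T R k).eval x) *
        (1 + 2 * ∑ j ∈ Icc 1 r, (1 - a j) * (T R j).eval x * (T R j).eval y) =
      chebMinor x y 0 k +
        ∑ j ∈ Icc 1 r, (1 - a j) * (chebMinor x y j (j + k) + chebMinor x y j (j - k)) := by
  rw [mul_add, mul_one, chebMinor_zero_left, mul_sum, mul_sum]
  congr 1
  refine sum_congr rfl fun j _ => ?_
  rw [← eval_T_sub_mul_two_mul_eval_T]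
  ring

lemma sum_one_sub_mul_chebMinor_sub (a : ℕ → R) {r k : ℕ} (hk : 1 ≤ k) (hkr : k ≤ r)
    (ha : ∀ m, r < m → a m = 1) :
    ∑ j ∈ Icc 1 r, (1 - a j) * chebMinor x y j (j - k) =
      ∑ j ∈ Icc 1 (k - 1), (1 - a j) * chebMinor x y j ↑(k - j) -
        (1 - a k) * chebMinor x y 0 k -
        ∑ j ∈ Icc 1 r, (1 - a (j + k)) * chebMinor x y j (j + k) := by
  rw [sum_Icc_one_eq_add_add_sum_Icc_succ _ hk hkr,
    sum_Icc_succ_eq_sum_Icc_one_add _ k r fun m hm => by rw [ha m hm, sub_self, zero_mul]]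
  have hlow : ∀ j ∈ Icc 1 (k - 1),
      (1 - a j) * chebMinor x y j (j - k) = (1 - a j) * chebMinor x y j ↑(k - j) :=
    fun j hj => by rw [chebMinor_sub_natCast x y (by simp only [mem_Icc] at hj; omega)]
  have hhigh : ∀ i ∈ Icc 1 r, (1 - a (i + k)) * chebMinor x y ↑(i + k) (↑(i + k) - k) =
      -((1 - a (i + k)) * chebMinor x y i (i + k)) := fun i _ => by
    rw [Nat.cast_add, add_sub_cancel_right, chebMinor_swap, mul_neg]
  rw [sum_congr rfl hlow, sum_congr rfl hhigh, sum_neg_distrib, sub_self, chebMinor_swap]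
  ring

theorem eval_T_sub_mul_kernel_eq (a : ℕ → R) {r k : ℕ} (hk : 1 ≤ k) (hkr : k ≤ r)
    (ha : ∀ m, r < m → a m = 1) :
    ((T R k).eval y - (T R k).eval x) *
        (1 + 2 * ∑ j ∈ Icc 1 r, (1 - a j) * (T R j).eval x * (T R j).eval y) =
      a k * chebMinor x y 0 k + ∑ j ∈ Icc 1 r, (a (j + k) - a j) * chebMinor x y j ↑(j + k) +
        ∑ j ∈ Icc 1 (k - 1), (1 - a j) * chebMinor x y j ↑(k - j) := by
  have hshift : ∑ j ∈ Icc 1 r, (a (j + k) - a j) * chebMinor x y j ↑(j + k) =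
      ∑ j ∈ Icc 1 r, (1 - a j) * chebMinor x y j (j + k) -
        ∑ j ∈ Icc 1 r, (1 - a (j + k)) * chebMinor x y j (j + k) := by
    rw [← sum_sub_distrib]
    refine sum_congr rfl fun j _ => ?_
    rw [Nat.cast_add]
    ring
  rw [eval_T_sub_mul_kernel, hshift]
  simp only [mul_add, sum_add_distrib]
  rw [sum_one_sub_mul_chebMinor_sub x y a hk hkr ha]
  ring

lemma two_mul_sum_one_sub_mul_chebMinor (a : ℕ → R) (k : ℕ) :
    2 * ∑ j ∈ Icc 1 (k - 1), (1 - a j) * chebMinor x y j ↑(k - j) =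
      ∑ j ∈ Icc 1 (k - 1), (a (k - j) - a j) * chebMinor x y j ↑(k - j) := by
  have hreflect : ∑ j ∈ Icc 1 (k - 1), (1 - a j) * chebMinor x y j ↑(k - j) =
      -∑ j ∈ Icc 1 (k - 1), (1 - a (k - j)) * chebMinor x y j ↑(k - j) := by
    rw [← sum_Icc_one_sub_reflect (fun j => (1 - a j) * chebMinor x y j ↑(k - j)) k,
      ← sum_neg_distrib]
    refine sum_congr rfl fun j hj => ?_
    rw [Nat.sub_sub_self (by simp only [mem_Icc] at hj; omega), chebMinor_swap, mul_neg]
  have hdiff : ∑ j ∈ Icc 1 (k - 1), (a (k - j) - a j) * chebMinor x y j ↑(k - j) =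
      ∑ j ∈ Icc 1 (k - 1), (1 - a j) * chebMinor x y j ↑(k - j) -
        ∑ j ∈ Icc 1 (k - 1), (1 - a (k - j)) * chebMinor x y j ↑(k - j) := by
    rw [← sum_sub_distrib]
    exact sum_congr rfl fun j _ => by ring
  linear_combination hreflect - hdiff

end ChebyshevKernel

lemma chebMinor_natCast (x y : ℝ) (m n : ℕ) :
    chebMinor x y m n =
      (chebT m).eval x * (chebT n).eval y - (chebT n).eval x * (chebT m).eval y :=
  rfl

lemma chebMinor_zero_natCast (x y : ℝ) (n : ℕ) :
    chebMinor x y 0 n = (chebT n).eval y - (chebT n).eval x :=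
  chebMinor_zero_left x y n

theorem Sker_symmetry_identity_general (r : ℕ) (a : ℕ → ℝ)
    (ha1 : ∀ m, r < m → a m = 1)
    (k : ℕ) (hk : k ≤ r) :
    ∀ x y : ℝ,
      (chebT k).eval y * Sker r a x y - (chebT k).eval x * Sker r a x y =
        a k * ((chebT k).eval y - (chebT k).eval x) +
        (∑ j ∈ Finset.Icc 1 r, (a (j + k) - a j) *
          ((chebT j).eval x * (chebT (j + k)).eval y -
            (chebT (j + k)).eval x * (chebT j).eval y)) +
        (1 / 2) * ∑ j ∈ Finset.Icc 1 (k - 1), (a (k - j) - a j) *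
          ((chebT j).eval x * (chebT (k - j)).eval y -
            (chebT (k - j)).eval x * (chebT j).eval y) := by
  intro x y
  obtain rfl | hk0 := Nat.eq_zero_or_pos k
  · simp [chebT]
  simp only [← chebMinor_natCast, ← chebMinor_zero_natCast, ← two_mul_sum_one_sub_mul_chebMinor]
  calc (chebT k).eval y * Sker r a x y - (chebT k).eval x * Sker r a x y
      = ((T ℝ k).eval y - (T ℝ k).eval x) *
          (1 + 2 * ∑ j ∈ Icc 1 r, (1 - a j) * (T ℝ j).eval x * (T ℝ j).eval y) :=
        (sub_mul _ _ _).symm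
    _ = _ := eval_T_sub_mul_kernel_eq x y a hk0 hk ha1
    _ = _ := by ring

/-- symmetry identity for `T_k(y) S_r^{(a)}(x,y) - T_k(x) S_r^{(a)}(x,y)`. -/
theorem Sker_symmetry_identity (r : ℕ) (hr : 1 ≤ r) (a : ℕ → ℝ) (ha0 : a 0 = 0)
    (ha : ∀ j ∈ Finset.Icc 1 r, a j ∈ Set.Icc (0 : ℝ) 1) (ha1 : ∀ m, r < m → a m = 1)
    (k : ℕ) (hk : k ≤ r) :
    ∀ x y : ℝ,
      (chebT k).eval y * Sker r a x y - (chebT k).eval x * Sker r a x y =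
        a k * ((chebT k).eval y - (chebT k).eval x) +
        (∑ j ∈ Finset.Icc 1 r, (a (j + k) - a j) *
          ((chebT j).eval x * (chebT (j + k)).eval y -
            (chebT (j + k)).eval x * (chebT j).eval y)) +
        (1 / 2) * ∑ j ∈ Finset.Icc 1 (k - 1), (a (k - j) - a j) *
          ((chebT j).eval x * (chebT (k - j)).eval y -
            (chebT (k - j)).eval x * (chebT j).eval y) :=
  Sker_symmetry_identity_general r a ha1 k hk
end

section
/- Let r ≥ 1 be an integer, let a = (a_1,…,a_r) ∈ [0,1]^r, extended by a_0 := 0 and a_m := 1 for m > r, and let 0 ≤ k ≤ r. Set A_{k,r}^{(a)} := −a_k² − (1/2)∑_{j=1}^{r} (a_{j+k} − a_j)² − (1/4)∑_{j=1}^{k−1} (a_{k−j} − a_j)². Then for every x ∈ ℝ: ∫_{−1}^{1} T_k(y)·S_r^{(a)}(x,y)² dμ(y) − M_r^{(a)}(x)·T_k(x) = A_{k,r}^{(a)}·T_k(x) − (1/2)∑_{j=1}^{r} (a_{j+k} − a_j)²·T_{2j+k}(x) − (1/4)∑_{j=1}^{k−1} (a_{k−j} − a_j)²·T_{|2j−k|}(x).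 -/
/-
Extend `j ↦ 1 - a_j` evenly to `c : ℤ → ℝ`; then `c 0 = 1`, `c m = 0` for `|m| > r`,
`S_r(x, ·) = ∑_{|i| ≤ r} c_i T_i(x) T_i` and `M_r(x) = ∑_{|i| ≤ r} c_i² T_i(x)²`.
As `μ` is the image of `dθ/π` on `(0, π)` under `cos`, the `T_i` are orthogonal, so
`∫ T_m · ∑ u_i T_i dμ = u_m` for even finitely supported `u`; with `2 T_m T_n = T_{m+n} + T_{m-n}`
this gives `∫ T_k S_r(x, ·)² dμ = ∑_i c_i c_{i+k} T_i(x) T_{i+k}(x)`.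
The product formula also rewrites each term of the difference with `M_r(x) T_k(x)` as
`-(c_{i+k} - c_i)² (T_k(x) + T_{2i+k}(x)) / 4` plus a difference `g(i+k) - g(i)` of a finitely
supported `g`, and such differences sum to zero over `ℤ`.
The remaining sum is invariant under `i ↦ -i-k`; folding it about `-k/2` gives the expansion.
-/

open Polynomial MeasureTheory

/-- The Chebyshev probability measure on `[-1,1]`, `dμ(y) = dy/(π √(1-y²))`. -/
noncomputable def chebMeasure : Measure ℝ :=
  (volume.restrict (Set.Icc (-1 : ℝ) 1)).withDensity
    (fun y => ENNReal.ofReal (1 / (Real.pi * Real.sqrt (1 - y ^ 2))))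

/-- `M_r^{(a)}(x) = 1 + 2∑_{j=1}^r (1-a_j)² T_j(x)²`. -/
noncomputable def Mfun (r : ℕ) (a : ℕ → ℝ) (x : ℝ) : ℝ :=
  1 + 2 * ∑ j ∈ Finset.Icc 1 r, (1 - a j) ^ 2 * (chebT j).eval x ^ 2

open Real Set Polynomial.Chebyshev

lemma Finset.sum_Icc_neg_comp {M : Type*} [AddCommMonoid M] (f : ℤ → M) (n : ℤ) :
    ∑ i ∈ Finset.Icc (-n) n, f (-i) = ∑ i ∈ Finset.Icc (-n) n, f i :=
  Finset.sum_nbij' (- ·) (- ·) (by intro i; simp; omega) (by intro i; simp; omega)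
    (by simp) (by simp) (by simp)

lemma Finset.sum_Icc_of_reflection_invariant {M : Type*} [AddCommMonoid M] (φ : ℤ → M) (r k : ℕ)
    (hφ : ∀ i, φ (-i - k) = φ i) :
    ∑ i ∈ Finset.Icc (-(r + k : ℤ)) r, φ i
      = 2 • ∑ j ∈ Finset.Icc 1 r, φ j + ∑ j ∈ Finset.range (k + 1), φ (-j) := by
  have hsplit : Finset.Icc (-(r + k : ℤ)) r
      = (Finset.Icc (-(r + k : ℤ)) (-(k + 1)) ∪ Finset.Icc 1 r) ∪ Finset.Icc (-k : ℤ) 0 := by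
    ext i; simp only [Finset.mem_union, Finset.mem_Icc]; omega
  have hreflected : ∑ i ∈ Finset.Icc (-(r + k : ℤ)) (-(k + 1)), φ i = ∑ j ∈ Finset.Icc 1 r, φ j :=
    Finset.sum_nbij' (fun i => (-i - k).toNat) (fun j => -j - k)
      (by intro i; simp; omega) (by intro j; simp; omega) (by intro i; simp; omega)
      (by intro j; simp) (by intro i hi; simp at hi; rw [← hφ i, Int.toNat_of_nonneg (by omega)])
  have hpositive : ∑ i ∈ Finset.Icc (1 : ℤ) r, φ i = ∑ j ∈ Finset.Icc 1 r, φ j :=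
    Finset.sum_nbij' Int.toNat (fun j => j)
      (by intro i; simp; omega) (by intro j; simp) (by intro i; simp; omega)
      (by intro j; simp) (by intro i hi; simp at hi; rw [Int.toNat_of_nonneg (by omega)])
  have hmiddle : ∑ i ∈ Finset.Icc (-k : ℤ) 0, φ i = ∑ j ∈ Finset.range (k + 1), φ (-j) :=
    Finset.sum_nbij' (fun i => (-i).toNat) (fun j => -j)
      (by intro i; simp; omega) (by intro j; simp) (by intro i; simp; omega)
      (by intro j; simp) (by intro i hi; simp at hi; rw [Int.toNat_of_nonneg (by omega), neg_neg])
  rw [hsplit, Finset.sum_union, Finset.sum_union, hreflected, hpositive, hmiddle, two_nsmul]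
  · exact Finset.disjoint_left.2 fun i => by simp only [Finset.mem_Icc]; omega
  · exact Finset.disjoint_left.2 fun i => by simp only [Finset.mem_union, Finset.mem_Icc]; omega

lemma Finset.sum_Icc_sub_comp_add_eq_zero {M : Type*} [AddCommGroup M] (g : ℤ → M) (r k : ℕ)
    (hg : ∀ i ∉ Finset.Icc (-(r : ℤ)) r, g i = 0) :
    ∑ i ∈ Finset.Icc (-(r + k : ℤ)) r, (g (i + k) - g i) = 0 := by
  have hshift : ∑ i ∈ Finset.Icc (-(r + k : ℤ)) r, g (i + k)
      = ∑ i ∈ Finset.Icc (-(r : ℤ)) (r + k), g i := by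
    rw [show Finset.Icc (-(r : ℤ)) (r + k) = (Finset.Icc (-(r + k : ℤ)) r).map
        (addRightEmbedding (k : ℤ)) by rw [Finset.map_add_right_Icc]; congr 1; ring,
      Finset.sum_map]
    rfl
  have hcore (s : Finset ℤ) (hs : Finset.Icc (-(r : ℤ)) r ⊆ s) :
      ∑ i ∈ s, g i = ∑ i ∈ Finset.Icc (-(r : ℤ)) r, g i :=
    (Finset.sum_subset hs fun i _ hi => hg i hi).symm
  rw [Finset.sum_sub_distrib, hshift,
    hcore (Finset.Icc _ _) (Finset.Icc_subset_Icc_right (by omega)),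
    hcore (Finset.Icc (-(r + k : ℤ)) r) (Finset.Icc_subset_Icc_left (by omega)), sub_self]

lemma Finset.sum_Icc_of_even {M : Type*} [AddCommMonoid M] {φ : ℤ → M} (hφ : φ.Even) (n : ℕ) :
    ∑ i ∈ Finset.Icc (-(n : ℤ)) n, φ i = φ 0 + 2 • ∑ j ∈ Finset.Icc 1 n, φ j := by
  simpa [add_comm] using Finset.sum_Icc_of_reflection_invariant φ n 0 fun i => by simpa using hφ i

lemma Finset.sum_range_add_two {M : Type*} [AddCommMonoid M] (f : ℕ → M) (n : ℕ) :
    ∑ j ∈ Finset.range (n + 2), f j = f 0 + ∑ j ∈ Finset.Icc 1 n, f j + f (n + 1) := by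
  rw [Finset.sum_range_succ, Finset.sum_range_succ', ← Finset.Ico_add_one_right_eq_Icc,
    Finset.range_eq_Ico, Finset.sum_Ico_add', zero_add, add_comm (f 0)]

lemma chebMeasure_eq_smul_map_cos :
    chebMeasure = ENNReal.ofReal π⁻¹ • (volume.restrict (Ioo 0 π)).map cos := by
  ext s hs
  have hIcc : volume.restrict (Icc (-1 : ℝ) 1) = volume.restrict (Ioo (-1) 1) :=
    Measure.restrict_congr_set Ioo_ae_eq_Icc.symm
  have himage : cos '' Ioo 0 π = Ioo (-1) 1 := cosPartialHomeomorph.image_source_eq_target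
  rw [chebMeasure, hIcc, withDensity_apply _ hs, ← lintegral_indicator hs,
    ← himage,
    lintegral_image_eq_lintegral_abs_deriv_mul measurableSet_Ioo
      (fun θ _ => (hasDerivAt_cos θ).hasDerivWithinAt) cosPartialHomeomorph.injOn,
    Measure.smul_apply, Measure.map_apply measurable_cos hs, smul_eq_mul,
    ← lintegral_indicator_const (measurable_cos hs)]
  refine setLIntegral_congr_fun measurableSet_Ioo fun θ hθ => ?_
  have hsin : 0 < sin θ := sin_pos_of_pos_of_lt_pi hθ.1 hθ.2
  have hsqrt : √(1 - cos θ ^ 2) = sin θ := by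
    rw [← sin_sq, Real.sqrt_sq hsin.le]
  by_cases hθs : cos θ ∈ s
  · simp only [indicator_of_mem hθs, indicator_of_mem (show θ ∈ cos ⁻¹' s from hθs), abs_neg,
      abs_of_pos hsin, hsqrt, ← ENNReal.ofReal_mul hsin.le]
    congr 1
    field_simp
  · simp [indicator_of_notMem hθs, indicator_of_notMem (show θ ∉ cos ⁻¹' s from hθs)]

lemma integrable_eval_chebMeasure (p : ℝ[X]) : Integrable (fun y => p.eval y) chebMeasure := by
  rw [chebMeasure_eq_smul_map_cos]
  refine Integrable.smul_measure ?_ ENNReal.ofReal_ne_top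
  rw [integrable_map_measure p.continuous.aestronglyMeasurable measurable_cos.aemeasurable]
  exact ((p.continuous.comp continuous_cos).integrableOn_Icc).mono_set Ioo_subset_Icc_self

lemma integral_eval_chebMeasure (p : ℝ[X]) :
    ∫ y, p.eval y ∂chebMeasure = π⁻¹ * ∫ θ in 0..π, p.eval (cos θ) := by
  rw [chebMeasure_eq_smul_map_cos, integral_smul_measure,
    integral_map measurable_cos.aemeasurable p.continuous.aestronglyMeasurable,
    intervalIntegral.integral_of_le pi_pos.le, integral_Ioc_eq_integral_Ioo,
    ENNReal.toReal_ofReal (inv_nonneg.2 pi_pos.le), smul_eq_mul]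

noncomputable def chebIntegral : ℝ[X] →ₗ[ℝ] ℝ where
  toFun p := ∫ y, p.eval y ∂chebMeasure
  map_add' p q := by
    simp only [eval_add]
    exact integral_add (integrable_eval_chebMeasure p) (integrable_eval_chebMeasure q)
  map_smul' c p := by
    simp only [eval_smul, smul_eq_mul, RingHom.id_apply]
    exact integral_const_mul c _

lemma chebIntegral_T (n : ℤ) : chebIntegral (T ℝ n) = if n = 0 then 1 else 0 := by
  change ∫ y, (T ℝ n).eval y ∂chebMeasure = _
  simp_rw [integral_eval_chebMeasure, T_real_cos]
  split_ifs with hn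
  · simp [hn, pi_ne_zero]
  · have hn' : (n : ℝ) ≠ 0 := Int.cast_ne_zero.2 hn
    simp [intervalIntegral.integral_comp_mul_left cos hn', integral_cos, sin_int_mul_pi]

lemma chebIntegral_T_mul_T (m n : ℤ) :
    chebIntegral (T ℝ m * T ℝ n) = ((if m = n then 1 else 0) + (if -m = n then 1 else 0)) / 2 := by
  have h := congrArg chebIntegral (T_mul_T ℝ m n)
  simp only [two_mul, add_mul, map_add, chebIntegral_T, add_eq_zero_iff_neg_eq,
    sub_eq_zero] at h
  linarith

noncomputable def chebSum (n : ℕ) (u : ℤ → ℝ) : ℝ[X] :=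
  ∑ i ∈ Finset.Icc (-(n : ℤ)) n, u i • T ℝ i

section chebSum

variable {n : ℕ} {u : ℤ → ℝ}

lemma chebIntegral_T_mul_chebSum (hu : u.Even)
    (hsupp : ∀ i ∉ Finset.Icc (-(n : ℤ)) n, u i = 0) (m : ℤ) :
    chebIntegral (T ℝ m * chebSum n u) = u m := by
  have hcoeff (c : ℤ) : (if c ∈ Finset.Icc (-(n : ℤ)) n then u c else 0) = u c :=
    ite_eq_left_iff.2 fun hc => (hsupp c hc).symm
  simp only [chebSum, Finset.mul_sum, mul_smul_comm, map_sum, map_smul, chebIntegral_T_mul_T,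
    smul_eq_mul, mul_add, add_div, ← mul_div_assoc, Finset.sum_add_distrib, ← Finset.sum_div,
    mul_ite, mul_one, mul_zero, Finset.sum_ite_eq, hcoeff]
  rw [hu]
  ring

lemma chebIntegral_T_mul_chebSum_sq (hu : u.Even)
    (hsupp : ∀ i ∉ Finset.Icc (-(n : ℤ)) n, u i = 0) (k : ℤ) :
    chebIntegral (T ℝ k * chebSum n u ^ 2) = ∑ i ∈ Finset.Icc (-(n : ℤ)) n, u i * u (i + k) := by
  have hterm (i : ℤ) :
      chebIntegral (T ℝ i * (T ℝ k * chebSum n u)) = (u (i + k) + u (i - k)) / 2 := by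
    have h := congrArg (fun p => chebIntegral (p * chebSum n u)) (T_mul_T ℝ i k)
    simp only [mul_assoc, two_mul, add_mul, map_add, chebIntegral_T_mul_chebSum hu hsupp] at h
    linarith
  have hrefl : ∑ i ∈ Finset.Icc (-(n : ℤ)) n, u i * u (i - k)
      = ∑ i ∈ Finset.Icc (-(n : ℤ)) n, u i * u (i + k) := by
    rw [← Finset.sum_Icc_neg_comp]
    refine Finset.sum_congr rfl fun i _ => ?_
    rw [hu, show -i - k = -(i + k) by ring, hu]
  rw [show T ℝ k * chebSum n u ^ 2 = chebSum n u * (T ℝ k * chebSum n u) by ring]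
  nth_rewrite 1 [chebSum]
  simp only [Finset.sum_mul, smul_mul_assoc, map_sum, map_smul, hterm, smul_eq_mul, mul_add,
    add_div, Finset.sum_add_distrib, mul_div_assoc', ← Finset.sum_div, hrefl]
  ring

end chebSum

lemma T_eval_mul_T_eval (x : ℝ) (m n : ℤ) :
    2 * (T ℝ m).eval x * (T ℝ n).eval x = (T ℝ (m + n)).eval x + (T ℝ (m - n)).eval x := by
  simpa using congrArg (eval x) (T_mul_T ℝ m n)

/-- The last bracket is `g (i + k) - g i` for `g i = c i ^ 2 * (T_k(x) + T_{2i-k}(x)) / 4`. -/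
lemma kernel_term_eq_sq_sub_add_telescoping (c : ℤ → ℝ) (x : ℝ) (i k : ℤ) :
    c i * (T ℝ i).eval x * (c (i + k) * (T ℝ (i + k)).eval x)
        - (c i * (T ℝ i).eval x) ^ 2 * (T ℝ k).eval x
      = -(1 / 4) * ((c (i + k) - c i) ^ 2 * ((T ℝ k).eval x + (T ℝ (2 * i + k)).eval x))
        + (c (i + k) ^ 2 * ((T ℝ k).eval x + (T ℝ (2 * (i + k) - k)).eval x) / 4
          - c i ^ 2 * ((T ℝ k).eval x + (T ℝ (2 * i - k)).eval x) / 4) := by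
  have h₁ := T_eval_mul_T_eval x i (i + k)
  have h₂ := T_eval_mul_T_eval x i i
  have h₃ := T_eval_mul_T_eval x (2 * i) k
  rw [show i - (i + k) = -k by ring, T_neg, show i + (i + k) = 2 * i + k by ring] at h₁
  rw [sub_self, T_zero, eval_one, ← two_mul] at h₂
  rw [show 2 * (i + k) - k = 2 * i + k by ring]
  linear_combination (c i * c (i + k) / 2) * h₁ - (c i ^ 2 * (T ℝ k).eval x / 2) * h₂
    - (c i ^ 2 / 4) * h₃

noncomputable def kernelCoeff (a : ℕ → ℝ) (i : ℤ) : ℝ := 1 - a i.natAbs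

section kernelCoeff

variable {r : ℕ} {a : ℕ → ℝ}

lemma kernelCoeff_even (a : ℕ → ℝ) : (kernelCoeff a).Even := fun i => by simp [kernelCoeff]

@[simp]
lemma kernelCoeff_natCast (a : ℕ → ℝ) (j : ℕ) : kernelCoeff a j = 1 - a j := rfl

lemma kernelCoeff_zero (ha0 : a 0 = 0) : kernelCoeff a 0 = 1 := by
  simp [kernelCoeff, ha0]

lemma kernelCoeff_eq_zero (ha1 : ∀ m, r < m → a m = 1) {i : ℤ}
    (hi : i ∉ Finset.Icc (-(r : ℤ)) r) : kernelCoeff a i = 0 := by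
  rw [kernelCoeff, ha1 _ (by simp only [Finset.mem_Icc] at hi; omega), sub_self]

lemma Sker_eq_eval_chebSum (ha0 : a 0 = 0) (x y : ℝ) :
    Sker r a x y = (chebSum r fun i => kernelCoeff a i * (T ℝ i).eval x).eval y := by
  have heven : (fun i => kernelCoeff a i * (T ℝ i).eval x * (T ℝ i).eval y).Even := fun i => by
    simp [kernelCoeff, T_neg]
  simp only [chebSum, eval_finsetSum, eval_smul, smul_eq_mul]
  rw [Finset.sum_Icc_of_even heven, Sker]
  simp [kernelCoeff_zero ha0, chebT, Finset.mul_sum, mul_assoc]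

lemma Mfun_eq_sum (ha0 : a 0 = 0) (x : ℝ) :
    Mfun r a x = ∑ i ∈ Finset.Icc (-(r : ℤ)) r, (kernelCoeff a i * (T ℝ i).eval x) ^ 2 := by
  have heven : (fun i => (kernelCoeff a i * (T ℝ i).eval x) ^ 2).Even := fun i => by
    simp [kernelCoeff, T_neg]
  rw [Finset.sum_Icc_of_even heven, Mfun]
  simp [kernelCoeff_zero ha0, chebT, mul_pow]

lemma integral_chebT_mul_Sker_sq (ha0 : a 0 = 0) (ha1 : ∀ m, r < m → a m = 1) (k : ℕ) (x : ℝ) :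
    ∫ y, (chebT k).eval y * Sker r a x y ^ 2 ∂chebMeasure
      = ∑ i ∈ Finset.Icc (-(r : ℤ)) r, kernelCoeff a i * (T ℝ i).eval x
          * (kernelCoeff a (i + k) * (T ℝ (i + k)).eval x) := by
  simp only [Sker_eq_eval_chebSum ha0, ← eval_pow, ← eval_mul]
  exact chebIntegral_T_mul_chebSum_sq ((kernelCoeff_even a).mul_even fun i => by simp [T_neg])
    (fun i hi => by simp [kernelCoeff_eq_zero ha1 hi]) k

end kernelCoeff

lemma sum_sq_sub_kernelCoeff_mul_eq {a : ℕ → ℝ} (ha0 : a 0 = 0) (r k : ℕ) (x : ℝ) :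
    ∑ i ∈ Finset.Icc (-(r + k : ℤ)) r, (kernelCoeff a (i + k) - kernelCoeff a i) ^ 2
        * ((T ℝ k).eval x + (T ℝ (2 * i + k)).eval x)
      = 2 * ∑ j ∈ Finset.Icc 1 r, (a (j + k) - a j) ^ 2
          * ((chebT k).eval x + (chebT (2 * j + k)).eval x)
        + (4 * a k ^ 2 * (chebT k).eval x
          + ∑ j ∈ Finset.Icc 1 (k - 1), (a (k - j) - a j) ^ 2
            * ((chebT k).eval x + (chebT ((2 * (j : ℤ) - k).natAbs)).eval x)) := by
  have hsymm (i : ℤ) : (kernelCoeff a (-i - k + k) - kernelCoeff a (-i - k)) ^ 2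
        * ((T ℝ k).eval x + (T ℝ (2 * (-i - k) + k)).eval x)
      = (kernelCoeff a (i + k) - kernelCoeff a i) ^ 2
        * ((T ℝ k).eval x + (T ℝ (2 * i + k)).eval x) := by
    rw [show -i - k + k = -i by ring, show 2 * (-i - k) + k = -(2 * i + k) by ring,
      show -i - k = -(i + k) by ring, kernelCoeff_even, kernelCoeff_even, T_neg]
    ring
  have hmiddle : ∀ j ∈ Finset.range (k + 1),
      (kernelCoeff a (-j + k) - kernelCoeff a (-j)) ^ 2
        * ((T ℝ k).eval x + (T ℝ (2 * -(j : ℤ) + k)).eval x)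
      = (a (k - j) - a j) ^ 2
        * ((chebT k).eval x + (chebT ((2 * (j : ℤ) - k).natAbs)).eval x) := by
    intro j hj
    rw [Finset.mem_range] at hj
    rw [show -(j : ℤ) + k = ((k - j : ℕ) : ℤ) by omega, kernelCoeff_even, kernelCoeff_natCast,
      kernelCoeff_natCast, chebT, chebT, T_natAbs, show 2 * -(j : ℤ) + k = -(2 * j - k) by ring,
      T_neg]
    ring
  rw [Finset.sum_Icc_of_reflection_invariant _ r k hsymm, nsmul_eq_mul, Nat.cast_ofNat,
    Finset.sum_congr rfl hmiddle]
  congr 1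
  · refine congrArg (2 * ·) (Finset.sum_congr rfl fun j _ => ?_)
    rw [← Nat.cast_add, kernelCoeff_natCast, kernelCoeff_natCast, chebT, chebT]
    push_cast
    ring
  · rcases k with _ | n
    · simp [ha0]
    · have hfirst : (2 * ((0 : ℕ) : ℤ) - ((n + 1 : ℕ) : ℤ)).natAbs = n + 1 := by omega
      have hlast : (2 * ((n + 1 : ℕ) : ℤ) - ((n + 1 : ℕ) : ℤ)).natAbs = n + 1 := by omega
      rw [Finset.sum_range_add_two, hfirst, hlast, Nat.sub_zero, Nat.sub_self, Nat.add_sub_cancel,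
        ha0]
      ring

theorem squared_kernel_expansion_general (r : ℕ) (a : ℕ → ℝ) (ha0 : a 0 = 0)
    (ha1 : ∀ m, r < m → a m = 1)
    (k : ℕ) :
    ∀ x : ℝ,
      (∫ y, (chebT k).eval y * (Sker r a x y) ^ 2 ∂chebMeasure) - Mfun r a x * (chebT k).eval x =
        (- (a k) ^ 2 - (1 / 2) * ∑ j ∈ Finset.Icc 1 r, (a (j + k) - a j) ^ 2
            - (1 / 4) * ∑ j ∈ Finset.Icc 1 (k - 1), (a (k - j) - a j) ^ 2) * (chebT k).eval x
        - (1 / 2) * ∑ j ∈ Finset.Icc 1 r, (a (j + k) - a j) ^ 2 * (chebT (2 * j + k)).eval x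
        - (1 / 4) * ∑ j ∈ Finset.Icc 1 (k - 1), (a (k - j) - a j) ^ 2 *
            (chebT ((2 * (j : ℤ) - (k : ℤ)).natAbs)).eval x := by
  intro x
  have hvanish : ∀ i ∈ Finset.Icc (-(r + k : ℤ)) r, i ∉ Finset.Icc (-(r : ℤ)) r →
      kernelCoeff a i * (T ℝ i).eval x * (kernelCoeff a (i + k) * (T ℝ (i + k)).eval x)
        - (kernelCoeff a i * (T ℝ i).eval x) ^ 2 * (T ℝ k).eval x = 0 := by
    intro i _ hi
    simp [kernelCoeff_eq_zero ha1 hi]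
  have htelescoped : (∫ y, (chebT k).eval y * (Sker r a x y) ^ 2 ∂chebMeasure)
      - Mfun r a x * (chebT k).eval x
      = -(1 / 4) * ∑ i ∈ Finset.Icc (-(r + k : ℤ)) r,
          (kernelCoeff a (i + k) - kernelCoeff a i) ^ 2
            * ((T ℝ k).eval x + (T ℝ (2 * i + k)).eval x) := by
    rw [integral_chebT_mul_Sker_sq ha0 ha1, Mfun_eq_sum ha0, chebT, Finset.sum_mul,
      ← Finset.sum_sub_distrib, Finset.sum_subset (Finset.Icc_subset_Icc_left (by omega)) hvanish]
    simp only [kernel_term_eq_sq_sub_add_telescoping, Finset.sum_add_distrib, ← Finset.mul_sum,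
      Finset.sum_Icc_sub_comp_add_eq_zero (fun i => kernelCoeff a i ^ 2
        * ((T ℝ k).eval x + (T ℝ (2 * i - k)).eval x) / 4) r k
        fun i hi => by simp [kernelCoeff_eq_zero ha1 hi], add_zero]
  rw [htelescoped, sum_sq_sub_kernelCoeff_mul_eq ha0]
  simp only [mul_add, Finset.sum_add_distrib, ← Finset.sum_mul]
  ring

/-- expansion of `∫ T_k(y) S_r^{(a)}(x,y)² dμ(y) - M_r^{(a)}(x) T_k(x)`. -/
theorem squared_kernel_expansion (r : ℕ) (hr : 1 ≤ r) (a : ℕ → ℝ) (ha0 : a 0 = 0)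
    (ha : ∀ j ∈ Finset.Icc 1 r, a j ∈ Set.Icc (0 : ℝ) 1) (ha1 : ∀ m, r < m → a m = 1)
    (k : ℕ) (hk : k ≤ r) :
    ∀ x : ℝ,
      (∫ y, (chebT k).eval y * (Sker r a x y) ^ 2 ∂chebMeasure) - Mfun r a x * (chebT k).eval x =
        (- (a k) ^ 2 - (1 / 2) * ∑ j ∈ Finset.Icc 1 r, (a (j + k) - a j) ^ 2
            - (1 / 4) * ∑ j ∈ Finset.Icc 1 (k - 1), (a (k - j) - a j) ^ 2) * (chebT k).eval x
        - (1 / 2) * ∑ j ∈ Finset.Icc 1 r, (a (j + k) - a j) ^ 2 * (chebT (2 * j + k)).eval x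
        - (1 / 4) * ∑ j ∈ Finset.Icc 1 (k - 1), (a (k - j) - a j) ^ 2 *
            (chebT ((2 * (j : ℤ) - (k : ℤ)).natAbs)).eval x :=
  squared_kernel_expansion_general r a ha0 ha1 k
end

section
/- Let r ≥ 1 be an integer and a = (a_1,…,a_r) ∈ [0,1]^r. Suppose S_r^{(a)}(x,y) ≥ 0 for all (x,y) ∈ [−1,1]². Then for every x ∈ [−1,1], M_r^{(a)}(x) ≥ 1/2 + ∑_{j=1}^{r} (1−a_j)². -/
open Polynomial

/-!
Putting `y = 1` shows that `f(α) = 1 + 2∑ⱼ (1 - aⱼ) cos(jα)` is nonnegative. Its autocorrelation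
`g(θ) = 1 + 2∑ⱼ (1 - aⱼ)² cos(jθ)` is then nonnegative too: averaging `f(α) f(α + θ)` over the
`2r + 1` equally spaced angles `α = 2πm/(2r+1)` computes it exactly, because every frequency
`0 < |d| ≤ 2r` averages to zero there. Finally, for `x = cos φ`, `cos²(jφ) = (1 + cos(2jφ))/2` gives
`M(x) = 1/2 + ∑ⱼ (1 - aⱼ)² + g(2φ)/2`.
-/

open Real Finset

theorem sum_range_cos_eq_zero {N : ℕ} {d : ℤ} (hd : ¬ (N : ℤ) ∣ d) (c : ℝ) :
    ∑ m ∈ range N, cos (d * (2 * π * m / N) + c) = 0 := by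
  rcases Nat.eq_zero_or_pos N with rfl | hN
  · simp
  have hζ := Complex.isPrimitiveRoot_exp N hN.ne'
  set z := Complex.exp (2 * π * Complex.I / N) ^ d
  have hz : z ≠ 1 := fun h => hd ((hζ.zpow_eq_one_iff_dvd d).mp h)
  have hzN : z ^ N = 1 := by
    rw [← zpow_natCast, ← zpow_mul, mul_comm d, zpow_mul, zpow_natCast, hζ.pow_eq_one, one_zpow]
  have hterm (m : ℕ) : Complex.exp ((d * (2 * π * m / N) + c : ℝ) * Complex.I) =
      Complex.exp (c * Complex.I) * z ^ m := by
    rw [← zpow_natCast, ← zpow_mul, ← Complex.exp_int_mul, ← Complex.exp_add]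
    congr 1
    push_cast
    ring
  have hsum : ∑ m ∈ range N, Complex.exp ((d * (2 * π * m / N) + c : ℝ) * Complex.I) = 0 := by
    rw [sum_congr rfl fun m _ => hterm m, ← mul_sum, geom_sum_eq hz, hzN, sub_self, zero_div,
      mul_zero]
  simpa only [Complex.exp_ofReal_mul_I_re, Complex.re_sum, Complex.zero_re] using
    congrArg Complex.re hsum

theorem sum_range_cos_eq_zero_of_abs_lt {N : ℕ} {d : ℤ} (hd : d ≠ 0) (hdN : |d| < N) (c : ℝ) :
    ∑ m ∈ range N, cos (d * (2 * π * m / N) + c) = 0 :=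
  sum_range_cos_eq_zero (fun h => hd (Int.eq_zero_of_abs_lt_dvd h hdN)) c

theorem sum_range_cos_mul_cos {N j k : ℕ} (hjk : 0 < j + k) (hN : j + k < N) (θ : ℝ) :
    ∑ m ∈ range N, cos (j * (2 * π * m / N)) * cos (k * (2 * π * m / N + θ)) =
      if j = k then N * cos (j * θ) / 2 else 0 := by
  have hsum : ∑ m ∈ range N, cos (((j + k : ℤ) : ℝ) * (2 * π * m / N) + k * θ) = 0 :=
    sum_range_cos_eq_zero_of_abs_lt (by omega) (by rw [abs_lt]; omega) _
  have hdiff : ∑ m ∈ range N, cos (((j - k : ℤ) : ℝ) * (2 * π * m / N) + -(k * θ)) =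
      if j = k then N * cos (j * θ) else 0 := by
    split_ifs with h
    · subst h
      simp
    · exact sum_range_cos_eq_zero_of_abs_lt (by omega) (by rw [abs_lt]; omega) _
  have hprod (m : ℕ) : cos (j * (2 * π * m / N)) * cos (k * (2 * π * m / N + θ)) =
      (cos (((j - k : ℤ) : ℝ) * (2 * π * m / N) + -(k * θ)) +
        cos (((j + k : ℤ) : ℝ) * (2 * π * m / N) + k * θ)) / 2 := by
    rw [eq_div_iff two_ne_zero, mul_comm, ← mul_assoc, two_mul_cos_mul_cos]
    push_cast
    ring_nf
  rw [sum_congr rfl fun m _ => hprod m, ← sum_div, sum_add_distrib, hsum, hdiff]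
  split_ifs <;> ring

noncomputable def cosSum (r : ℕ) (b : ℕ → ℝ) (α : ℝ) : ℝ :=
  ∑ j ∈ Icc 1 r, b j * cos (j * α)

section cosSum

variable {N r : ℕ} (b : ℕ → ℝ) (θ : ℝ)

theorem sum_range_cosSum_eq_zero (hN : r < N) :
    ∑ m ∈ range N, cosSum r b (2 * π * m / N + θ) = 0 := by
  unfold cosSum
  rw [sum_comm]
  refine sum_eq_zero fun j hj => ?_
  rw [mem_Icc] at hj
  have hcos : ∑ m ∈ range N, cos ((j : ℤ) * (2 * π * m / N) + j * θ) = 0 :=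
    sum_range_cos_eq_zero_of_abs_lt (by omega) (by rw [abs_lt]; omega) _
  rw [← mul_sum]
  simpa [mul_add] using congrArg (b j * ·) hcos

theorem sum_range_cosSum_mul_cosSum (hN : 2 * r < N) :
    ∑ m ∈ range N, cosSum r b (2 * π * m / N) * cosSum r b (2 * π * m / N + θ) =
      N / 2 * cosSum r (fun j => b j ^ 2) θ := by
  have hinner {j : ℕ} (hj : j ∈ Icc 1 r) :
      ∑ k ∈ Icc 1 r, ∑ m ∈ range N,
        b j * cos (j * (2 * π * m / N)) * (b k * cos (k * (2 * π * m / N + θ))) =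
      N / 2 * (b j ^ 2 * cos (j * θ)) := by
    have hcoef (k : ℕ) (hk : k ∈ Icc 1 r) : ∑ m ∈ range N,
        b j * cos (j * (2 * π * m / N)) * (b k * cos (k * (2 * π * m / N + θ))) =
        if j = k then b j * b k * (N * cos (j * θ) / 2) else 0 := by
      rw [mem_Icc] at hj hk
      simp_rw [mul_mul_mul_comm (b j)]
      rw [← mul_sum, sum_range_cos_mul_cos (N := N) (by omega) (by omega), mul_ite, mul_zero]
    rw [sum_congr rfl hcoef, sum_ite_eq, if_pos hj]
    ring
  simp_rw [cosSum, sum_mul_sum, sum_comm (s := range N)]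
  rw [sum_congr rfl fun j hj => hinner hj, mul_sum]

theorem sum_range_autocorrelation (hN : 2 * r < N) :
    ∑ m ∈ range N,
        (1 + 2 * cosSum r b (2 * π * m / N)) * (1 + 2 * cosSum r b (2 * π * m / N + θ)) =
      N * (1 + 2 * cosSum r (fun j => b j ^ 2) θ) := by
  have h0 := sum_range_cosSum_eq_zero b 0 (by omega : r < N)
  simp only [add_zero] at h0
  simp only [add_mul, mul_add, one_mul, mul_one, sum_add_distrib, sum_const, card_range,
    nsmul_eq_mul, mul_mul_mul_comm (2 : ℝ), ← mul_sum, h0,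
    sum_range_cosSum_eq_zero b θ (by omega : r < N), sum_range_cosSum_mul_cosSum b θ hN]
  ring

theorem one_add_two_mul_cosSum_sq_nonneg (hb : ∀ α, 0 ≤ 1 + 2 * cosSum r b α) :
    0 ≤ 1 + 2 * cosSum r (fun j => b j ^ 2) θ := by
  have hcorr := sum_range_autocorrelation b θ (Nat.lt_succ_self (2 * r))
  refine nonneg_of_mul_nonneg_right ?_ (by positivity : (0 : ℝ) < (2 * r + 1 : ℕ))
  rw [← hcorr]
  exact sum_nonneg fun m _ => mul_nonneg (hb _) (hb _)

end cosSum

theorem chebT_eval_cos (j : ℕ) (t : ℝ) : (chebT j).eval (cos t) = cos (j * t) := by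
  rw [chebT, Chebyshev.T_real_cos, Int.cast_natCast]

theorem chebT_eval_one (j : ℕ) : (chebT j).eval 1 = 1 :=
  Chebyshev.T_eval_one ℝ _

theorem Sker_cos_one (r : ℕ) (a : ℕ → ℝ) (α : ℝ) :
    Sker r a (cos α) 1 = 1 + 2 * cosSum r (fun j => 1 - a j) α := by
  simp only [Sker, cosSum, chebT_eval_cos, chebT_eval_one, mul_one]

theorem Mfun_cos (r : ℕ) (a : ℕ → ℝ) (φ : ℝ) :
    Mfun r a (cos φ) = 1 / 2 + ∑ j ∈ Icc 1 r, (1 - a j) ^ 2 +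
      (1 + 2 * cosSum r (fun j => (1 - a j) ^ 2) (2 * φ)) / 2 := by
  have hterm (j : ℕ) : (1 - a j) ^ 2 * cos (j * φ) ^ 2 =
      ((1 - a j) ^ 2 + (1 - a j) ^ 2 * cos (j * (2 * φ))) / 2 := by
    rw [cos_sq, show 2 * (j * φ) = j * (2 * φ) by ring]
    ring
  simp only [Mfun, cosSum, chebT_eval_cos, hterm, ← sum_div, sum_add_distrib]
  ring

theorem Mfun_lower_bound_general (r : ℕ) (a : ℕ → ℝ)
    (hS : ∀ x ∈ Set.Icc (-1 : ℝ) 1, ∀ y ∈ Set.Icc (-1 : ℝ) 1, 0 ≤ Sker r a x y) :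
    ∀ x ∈ Set.Icc (-1 : ℝ) 1,
      1 / 2 + ∑ j ∈ Finset.Icc 1 r, (1 - a j) ^ 2 ≤ Mfun r a x := by
  intro x hx
  have hb (α : ℝ) : 0 ≤ 1 + 2 * cosSum r (fun j => 1 - a j) α := by
    rw [← Sker_cos_one]
    exact hS _ ⟨neg_one_le_cos α, cos_le_one α⟩ 1 (by norm_num)
  have hsq := one_add_two_mul_cosSum_sq_nonneg _ (2 * arccos x) hb
  rw [← cos_arccos hx.1 hx.2, Mfun_cos]
  linarith

/-- if `S_r^{(a)} ≥ 0` on `[-1,1]²` then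
`M_r^{(a)}(x) ≥ 1/2 + ∑_{j=1}^r (1-a_j)²` on `[-1,1]`. -/
theorem Mfun_lower_bound (r : ℕ) (hr : 1 ≤ r) (a : ℕ → ℝ)
    (ha : ∀ j ∈ Finset.Icc 1 r, a j ∈ Set.Icc (0 : ℝ) 1)
    (hS : ∀ x ∈ Set.Icc (-1 : ℝ) 1, ∀ y ∈ Set.Icc (-1 : ℝ) 1, 0 ≤ Sker r a x y) :
    ∀ x ∈ Set.Icc (-1 : ℝ) 1,
      1 / 2 + ∑ j ∈ Finset.Icc 1 r, (1 - a j) ^ 2 ≤ Mfun r a x :=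
  Mfun_lower_bound_general r a hS
end

section
/- Let φ : ℝ → ℝ be continuous with φ(x) = 0 for x ≤ 0, φ(x) = 1 for x ≥ 1, and φ continuously differentiable on [0,1], and set M := sup_{t∈[0,1]} |φ'(t)|, assumed positive. Then ∫_0^1 (1 − φ(t))² dt ≥ 1/(3M). -/
/-!
Write `M := phiDerivSup φ`. By the mean value inequality `|φ t - φ 0| ≤ M t` on `[0, 1]`; at
`t = 1` this gives `M ≥ 1`, and in general `1 - φ t ≥ 1 - M t ≥ 0` for `t ∈ [0, 1/M]`. Hence
`∫₀¹ (1 - φ)² ≥ ∫₀^{1/M} (1 - M t)² dt = 1 / (3M)`.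
-/

/-- The sup-norm of the derivative of `φ` on `[0,1]` (derivative taken within `[0,1]`). -/
noncomputable def phiDerivSup (φ : ℝ → ℝ) : ℝ :=
  ⨆ t : Set.Icc (0 : ℝ) 1, |derivWithin φ (Set.Icc 0 1) t|

open Set MeasureTheory intervalIntegral

theorem integral_one_sub_mul_sq {M : ℝ} (hM : M ≠ 0) :
    ∫ t in (0 : ℝ)..M⁻¹, (1 - M * t) ^ 2 = 1 / (3 * M) := by
  rw [integral_comp_mul_left (fun x => (1 - x) ^ 2) hM, integral_comp_sub_left (fun x => x ^ 2)]
  simp [hM]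
  ring

theorem le_integral_sq_one_sub_of_le_mul {φ : ℝ → ℝ} {M : ℝ} (hM : 1 ≤ M)
    (hφ : ContinuousOn φ (Icc 0 1)) (hle : ∀ t ∈ Icc (0 : ℝ) 1, φ t ≤ M * t) :
    1 / (3 * M) ≤ ∫ t in (0 : ℝ)..1, (1 - φ t) ^ 2 := by
  have hM₀ : 0 < M := one_pos.trans_le hM
  have hMinv : M⁻¹ ≤ 1 := inv_le_one_of_one_le₀ hM
  have hint : IntervalIntegrable (fun t => (1 - φ t) ^ 2) volume 0 1 :=
    ((continuousOn_const.sub hφ).pow 2).intervalIntegrable_of_Icc zero_le_one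
  calc 1 / (3 * M)
      = ∫ t in (0 : ℝ)..M⁻¹, (1 - M * t) ^ 2 := (integral_one_sub_mul_sq hM₀.ne').symm
    _ ≤ ∫ t in (0 : ℝ)..M⁻¹, (1 - φ t) ^ 2 := by
      refine integral_mono_on (inv_nonneg.2 hM₀.le)
        ((by fun_prop : Continuous fun t : ℝ => (1 - M * t) ^ 2).intervalIntegrable _ _)
        (hint.mono_set ?_) fun t ht => ?_
      · rw [uIcc_of_le (inv_nonneg.2 hM₀.le), uIcc_of_le zero_le_one]
        exact Icc_subset_Icc_right hMinv
      · have hMt : M * t ≤ 1 := by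
          simpa [hM₀.ne'] using mul_le_mul_of_nonneg_left ht.2 hM₀.le
        have hφt := hle t ⟨ht.1, ht.2.trans hMinv⟩
        exact pow_le_pow_left₀ (by linarith) (by linarith) 2
    _ ≤ ∫ t in (0 : ℝ)..1, (1 - φ t) ^ 2 :=
      integral_mono_interval le_rfl (inv_nonneg.2 hM₀.le) hMinv
        (Filter.Eventually.of_forall fun _ => sq_nonneg _) hint

theorem abs_derivWithin_le_phiDerivSup {φ : ℝ → ℝ} (hφ : ContDiffOn ℝ 1 φ (Icc 0 1))
    {t : ℝ} (ht : t ∈ Icc (0 : ℝ) 1) : |derivWithin φ (Icc 0 1) t| ≤ phiDerivSup φ := by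
  have hcont : ContinuousOn (derivWithin φ (Icc 0 1)) (Icc 0 1) :=
    hφ.continuousOn_derivWithin (uniqueDiffOn_Icc zero_lt_one) le_rfl
  obtain ⟨C, hC⟩ := isCompact_Icc.exists_bound_of_continuousOn hcont
  exact le_ciSup ⟨C, by rintro _ ⟨s, rfl⟩; exact hC s s.2⟩ (⟨t, ht⟩ : Icc (0 : ℝ) 1)

theorem abs_sub_le_phiDerivSup_mul {φ : ℝ → ℝ} (hφ : ContDiffOn ℝ 1 φ (Icc 0 1))
    {t : ℝ} (ht : t ∈ Icc (0 : ℝ) 1) : |φ t - φ 0| ≤ phiDerivSup φ * t := by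
  simpa [abs_of_nonneg ht.1] using
    (convex_Icc (0 : ℝ) 1).norm_image_sub_le_of_norm_derivWithin_le
      (hφ.differentiableOn one_ne_zero) (fun s hs => abs_derivWithin_le_phiDerivSup hφ hs)
      (left_mem_Icc.2 zero_le_one) ht

theorem integral_one_sub_phi_sq_lower_bound_general (φ : ℝ → ℝ)
    (h0 : ∀ x : ℝ, x ≤ 0 → φ x = 0) (h1 : ∀ x : ℝ, 1 ≤ x → φ x = 1)
    (hC1 : ContDiffOn ℝ 1 φ (Set.Icc 0 1)) :
    1 / (3 * phiDerivSup φ) ≤ ∫ t in (0 : ℝ)..1, (1 - φ t) ^ 2 := by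
  have hφ₀ : φ 0 = 0 := h0 0 le_rfl
  have hM : 1 ≤ phiDerivSup φ := by
    simpa [hφ₀, h1 1 le_rfl] using abs_sub_le_phiDerivSup_mul hC1 (right_mem_Icc.2 zero_le_one)
  refine le_integral_sq_one_sub_of_le_mul hM hC1.continuousOn fun t ht => ?_
  simpa [hφ₀] using (le_abs_self _).trans (abs_sub_le_phiDerivSup_mul hC1 ht)

/-- `∫_0^1 (1-φ(t))² dt ≥ 1/(3M)` where `M = ‖φ'‖_∞ > 0`. -/
theorem integral_one_sub_phi_sq_lower_bound (φ : ℝ → ℝ) (hcont : Continuous φ)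
    (h0 : ∀ x : ℝ, x ≤ 0 → φ x = 0) (h1 : ∀ x : ℝ, 1 ≤ x → φ x = 1)
    (hC1 : ContDiffOn ℝ 1 φ (Set.Icc 0 1)) (hpos : 0 < phiDerivSup φ) :
    1 / (3 * phiDerivSup φ) ≤ ∫ t in (0 : ℝ)..1, (1 - φ t) ^ 2 :=
  integral_one_sub_phi_sq_lower_bound_general φ h0 h1 hC1
end

section
/- Let n ≥ 1 be an integer, ε > 0, let k_1,…,k_n ∈ ℕ, and let f_1,…,f_n be univariate real polynomials with ‖f_i − T_{k_i}‖_{1,cheb} ≤ ε for every i ∈ {1,…,n}. Then the n-variate real polynomial x ↦ ∏_{i=1}^n f_i(x_i) satisfies ‖∏_{i=1}^n f_i(x_i) − ∏_{i=1}^n T_{k_i}(x_i)‖_{1,cheb} ≤ ε·∑_{i=0}^{n−1} (1+ε)^i. Moreover, if ε ≤ 1/n then ‖∏_{i=1}^n f_i(x_i) − ∏_{i=1}^n T_{k_i}(x_i)‖_{1,cheb} ≤ e·ε·n, where e is Euler's number. -/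
open Polynomial

/-- The Chebyshev 1-norm of a univariate real polynomial: the sum of the absolute
values of the coefficients in the (unique) expansion in the Chebyshev basis. -/
noncomputable def cheb1Norm (p : Polynomial ℝ) : ℝ :=
  sInf {s : ℝ | ∃ c : ℕ →₀ ℝ,
    p = c.sum (fun j coef => Polynomial.C coef * chebT j) ∧ s = c.sum (fun _ coef => |coef|)}

/-- The multivariate (tensor) Chebyshev polynomial `T_α(x) = ∏ᵢ T_{αᵢ}(xᵢ)`. -/
noncomputable def mvChebT (n : ℕ) (α : Fin n → ℕ) : MvPolynomial (Fin n) ℝ :=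
  ∏ i, Polynomial.aeval (MvPolynomial.X i) (chebT (α i))

/-- The Chebyshev 1-norm of an n-variate real polynomial: the sum of the absolute values
of the coefficients in the (unique) expansion in the tensor Chebyshev basis. -/
noncomputable def mvCheb1Norm {n : ℕ} (p : MvPolynomial (Fin n) ℝ) : ℝ :=
  sInf {s : ℝ | ∃ c : (Fin n → ℕ) →₀ ℝ,
    p = c.sum (fun α coef => MvPolynomial.C coef * mvChebT n α) ∧
    s = c.sum (fun _ coef => |coef|)}

/-!
Write `f i = T_{k i} + d i` with `‖d i‖₁ < r`. Expanding the product, `∏ f_i(x_i)` has the tensor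
coefficients `α ↦ ∏ (e_i + d_i)(α_i)` and `∏ T_{k_i}(x_i)` has `α ↦ ∏ e_i(α_i)`, where `e_i` is the
unit vector at `k i`. The pointwise bound `|∏ (a_i + b_i) - ∏ a_i| ≤ ∏ (|a_i| + |b_i|) - ∏ |a_i|`,
summed over `α`, factors into `∏ (1 + ‖d_i‖₁) - 1 ≤ (1 + r)^n - 1`; letting `r ↓ ε` gives
`(1 + ε)^n - 1 = ε ∑_{i<n} (1 + ε)^i`. If `ε n ≤ 1`, every term is at most `e^{ε n} ≤ e`.
-/
noncomputable def absSum {σ : Type*} (c : σ →₀ ℝ) : ℝ := c.sum fun _ a => |a|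

lemma absSum_nonneg {σ : Type*} (c : σ →₀ ℝ) : 0 ≤ absSum c :=
  Finset.sum_nonneg fun _ _ => abs_nonneg _

lemma absSum_eq_sum_of_support_subset {σ : Type*} (c : σ →₀ ℝ) {s : Finset σ}
    (hs : c.support ⊆ s) : absSum c = ∑ x ∈ s, |c x| :=
  Finsupp.sum_of_support_subset c hs _ fun _ _ => abs_zero

lemma exists_chebT_expansion (p : ℝ[X]) : ∃ c : ℕ →₀ ℝ, p = c.sum fun j a => C a * chebT j := by
  have hspan := (Chebyshev.chebyshevTsequence ℝ).span fun i => by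
    simp [Chebyshev.chebyshevTsequence]
  obtain ⟨c, hc⟩ := Finsupp.mem_span_range_iff_exists_finsupp.1 (hspan ▸ Submodule.mem_top (x := p))
  exact ⟨c, by simpa [Chebyshev.chebyshevTsequence, chebT, smul_eq_C_mul] using hc.symm⟩

-- Without `exists_chebT_expansion`, `cheb1Norm p` could be the junk value `sInf ∅ = 0`.
lemma exists_chebT_expansion_of_cheb1Norm_lt {p : ℝ[X]} {r : ℝ} (h : cheb1Norm p < r) :
    ∃ c : ℕ →₀ ℝ, p = (c.sum fun j a => C a * chebT j) ∧ absSum c < r := by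
  obtain ⟨c, hc⟩ := exists_chebT_expansion p
  obtain ⟨_, ⟨c, hp, rfl⟩, hlt⟩ := exists_lt_of_csInf_lt (by exact ⟨_, c, hc, rfl⟩) h
  exact ⟨c, hp, hlt⟩

lemma mvCheb1Norm_le_absSum {n : ℕ} {p : MvPolynomial (Fin n) ℝ} (c : (Fin n → ℕ) →₀ ℝ)
    (hp : p = c.sum fun α a => MvPolynomial.C a * mvChebT n α) : mvCheb1Norm p ≤ absSum c :=
  csInf_le ⟨0, by rintro _ ⟨c, -, rfl⟩; exact absSum_nonneg c⟩ ⟨c, hp, rfl⟩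

lemma abs_prod_add_sub_prod_le {ι : Type*} (s : Finset ι) (a b : ι → ℝ) :
    |∏ i ∈ s, (a i + b i) - ∏ i ∈ s, a i| ≤ ∏ i ∈ s, (|a i| + |b i|) - ∏ i ∈ s, |a i| := by
  classical
  induction s using Finset.induction_on with
  | empty => simp
  | insert j s hj ih =>
    simp only [Finset.prod_insert hj]
    set P := ∏ i ∈ s, (a i + b i)
    set Q := ∏ i ∈ s, a i
    have hsplit : (a j + b j) * P - a j * Q = (a j + b j) * (P - Q) + b j * Q := by ring
    calc |(a j + b j) * P - a j * Q|
        ≤ (|a j| + |b j|) * |P - Q| + |b j| * |Q| := by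
          rw [hsplit]
          refine (abs_add_le _ _).trans ?_
          rw [abs_mul, abs_mul]
          gcongr
          exact abs_add_le _ _
      _ ≤ (|a j| + |b j|) * (∏ i ∈ s, (|a i| + |b i|) - ∏ i ∈ s, |a i|) + |b j| * |Q| := by
          gcongr
      _ = _ := by rw [Finset.abs_prod]; ring

section PiProd

variable {ι κ R : Type*} [Fintype ι] [DecidableEq ι] [CommMonoidWithZero R]

noncomputable def finsuppPiProd (c : ι → κ →₀ R) : (ι → κ) →₀ R :=
  Finsupp.onFinset (Fintype.piFinset fun i => (c i).support) (fun α => ∏ i, c i (α i))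
    fun _ hα => Fintype.mem_piFinset.2 fun i =>
      Finsupp.mem_support_iff.2 fun hi => hα (Finset.prod_eq_zero (Finset.mem_univ i) hi)

lemma finsuppPiProd_apply (c : ι → κ →₀ R) (α : ι → κ) :
    finsuppPiProd c α = ∏ i, c i (α i) := rfl

lemma support_finsuppPiProd_subset (c : ι → κ →₀ R) :
    (finsuppPiProd c).support ⊆ Fintype.piFinset fun i => (c i).support :=
  Finsupp.support_onFinset_subset

end PiProd

lemma absSum_finsuppPiProd_add_sub_le {ι κ : Type*} [Fintype ι] [DecidableEq ι] [DecidableEq κ]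
    (a b : ι → κ →₀ ℝ) :
    absSum (finsuppPiProd (a + b) - finsuppPiProd a)
      ≤ ∏ i, (absSum (a i) + absSum (b i)) - ∏ i, absSum (a i) := by
  set S : ι → Finset κ := fun i => (a i).support ∪ (b i).support
  have hsupp : (finsuppPiProd (a + b) - finsuppPiProd a).support ⊆ Fintype.piFinset S := by
    refine Finsupp.support_sub.trans (Finset.union_subset ?_ ?_) <;>
      refine (support_finsuppPiProd_subset _).trans (Fintype.piFinset_subset _ _ fun i => ?_)
    · exact Finsupp.support_add
    · exact Finset.subset_union_left
  have hA : ∏ i, absSum (a i) = ∏ i, ∑ j ∈ S i, |a i j| := Finset.prod_congr rfl fun i _ =>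
    absSum_eq_sum_of_support_subset _ Finset.subset_union_left
  have hAB : ∏ i, (absSum (a i) + absSum (b i)) = ∏ i, ∑ j ∈ S i, (|a i j| + |b i j|) :=
    Finset.prod_congr rfl fun i _ => by
      rw [Finset.sum_add_distrib, absSum_eq_sum_of_support_subset _ Finset.subset_union_left,
        absSum_eq_sum_of_support_subset (b i) Finset.subset_union_right]
  rw [hA, hAB, Finset.prod_univ_sum, Finset.prod_univ_sum, ← Finset.sum_sub_distrib,
    absSum_eq_sum_of_support_subset _ hsupp]
  exact Finset.sum_le_sum fun α _ =>
    abs_prod_add_sub_prod_le Finset.univ (fun i => a i (α i)) (fun i => b i (α i))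

lemma sum_finsuppPiProd_mvChebT {n : ℕ} (c : Fin n → ℕ →₀ ℝ) :
    ((finsuppPiProd c).sum fun α a => MvPolynomial.C a * mvChebT n α)
      = ∏ i, aeval (MvPolynomial.X i) ((c i).sum fun j a => C a * chebT j) := by
  have hfactor : ∀ i, aeval (MvPolynomial.X i) ((c i).sum fun j a => C a * chebT j)
      = ∑ j ∈ (c i).support, MvPolynomial.C (c i j) * aeval (MvPolynomial.X i) (chebT j) := by
    intro i
    simp [Finsupp.sum, MvPolynomial.algebraMap_eq]
  simp_rw [hfactor]
  rw [Finset.prod_univ_sum,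
    Finsupp.sum_of_support_subset _ (support_finsuppPiProd_subset c) _ (by simp)]
  refine Finset.sum_congr rfl fun α _ => ?_
  rw [finsuppPiProd_apply, Finset.prod_mul_distrib, map_prod, mvChebT]

lemma mvCheb1Norm_prod_sub_mvChebT_le_of_lt {n : ℕ} (k : Fin n → ℕ) (f : Fin n → ℝ[X]) {r : ℝ}
    (hf : ∀ i, cheb1Norm (f i - chebT (k i)) < r) :
    mvCheb1Norm ((∏ i, aeval (MvPolynomial.X i) (f i)) - mvChebT n k) ≤ (1 + r) ^ n - 1 := by
  choose d hd hdr using fun i => exists_chebT_expansion_of_cheb1Norm_lt (hf i)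
  set e : Fin n → ℕ →₀ ℝ := fun i => Finsupp.single (k i) 1
  have he : ∀ i, ((e i).sum fun j a => C a * chebT j) = chebT (k i) := by simp [e]
  have hed : ∀ i, ((e + d) i).sum (fun j a => C a * chebT j) = f i := by
    intro i
    rw [Pi.add_apply, Finsupp.sum_add_index' (by simp) (by simp [add_mul]), he, ← hd i,
      add_sub_cancel]
  have hrep : (∏ i, aeval (MvPolynomial.X i) (f i)) - mvChebT n k
      = (finsuppPiProd (e + d) - finsuppPiProd e).sum fun α a => MvPolynomial.C a * mvChebT n α := by
    rw [Finsupp.sum_sub_index (by simp [sub_mul]), sum_finsuppPiProd_mvChebT,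
      sum_finsuppPiProd_mvChebT]
    simp_rw [hed, he]
    rfl
  have habs_e : ∀ i, absSum (e i) = 1 := by simp [e, absSum]
  calc mvCheb1Norm _ ≤ absSum (finsuppPiProd (e + d) - finsuppPiProd e) :=
        mvCheb1Norm_le_absSum _ hrep
    _ ≤ ∏ i, (absSum (e i) + absSum (d i)) - ∏ i, absSum (e i) :=
        absSum_finsuppPiProd_add_sub_le e d
    _ ≤ (1 + r) ^ n - 1 := by
        simp_rw [habs_e, Finset.prod_const_one]
        gcongr
        calc ∏ i, (1 + absSum (d i)) ≤ ∏ _i : Fin n, (1 + r) :=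
              Finset.prod_le_prod (fun i _ => by linarith [absSum_nonneg (d i)])
                fun i _ => by linarith [hdr i]
          _ = (1 + r) ^ n := by simp

open Filter Topology in
lemma mvCheb1Norm_prod_sub_mvChebT_le {n : ℕ} (k : Fin n → ℕ) (f : Fin n → ℝ[X]) {ε : ℝ}
    (hf : ∀ i, cheb1Norm (f i - chebT (k i)) ≤ ε) :
    mvCheb1Norm ((∏ i, aeval (MvPolynomial.X i) (f i)) - mvChebT n k) ≤ (1 + ε) ^ n - 1 := by
  have hlim : Tendsto (fun r : ℝ => (1 + r) ^ n - 1) (𝓝[>] ε) (𝓝 ((1 + ε) ^ n - 1)) :=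
    ((by fun_prop : Continuous fun r : ℝ => (1 + r) ^ n - 1).tendsto ε).mono_left
      nhdsWithin_le_nhds
  exact ge_of_tendsto hlim <| eventually_nhdsWithin_of_forall fun r hr =>
    mvCheb1Norm_prod_sub_mvChebT_le_of_lt k f fun i => (hf i).trans_lt hr

lemma one_add_pow_le_exp_one {ε : ℝ} {m : ℕ} (hε : -1 ≤ ε) (h : ε * m ≤ 1) :
    (1 + ε) ^ m ≤ Real.exp 1 :=
  calc (1 + ε) ^ m ≤ Real.exp ε ^ m := by
        gcongr
        · linarith
        · linarith [Real.add_one_le_exp ε]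
    _ = Real.exp (ε * m) := by rw [← Real.exp_nat_mul, mul_comm]
    _ ≤ Real.exp 1 := Real.exp_le_exp.2 h

theorem mvCheb1Norm_prod_error_general (n : ℕ) (ε : ℝ) (hε : 0 < ε)
    (k : Fin n → ℕ) (f : Fin n → Polynomial ℝ)
    (hf : ∀ i, cheb1Norm (f i - chebT (k i)) ≤ ε) :
    mvCheb1Norm ((∏ i, Polynomial.aeval (MvPolynomial.X i) (f i)) - mvChebT n k) ≤
      ε * ∑ i ∈ Finset.range n, (1 + ε) ^ i ∧
    (ε ≤ 1 / n →
      mvCheb1Norm ((∏ i, Polynomial.aeval (MvPolynomial.X i) (f i)) - mvChebT n k) ≤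
        Real.exp 1 * ε * n) := by
  have hgeom : (1 + ε) ^ n - 1 = ε * ∑ i ∈ Finset.range n, (1 + ε) ^ i := by
    rw [← geom_sum_mul, add_sub_cancel_left, mul_comm]
  have hbound := hgeom ▸ mvCheb1Norm_prod_sub_mvChebT_le k f hf
  refine ⟨hbound, fun hεn => ?_⟩
  have hεn' : ε * n ≤ 1 := mul_le_of_le_div₀ zero_le_one n.cast_nonneg hεn
  have hterm : ∀ i ∈ Finset.range n, (1 + ε) ^ i ≤ Real.exp 1 := fun i hi =>
    one_add_pow_le_exp_one (by linarith) <|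
      (mul_le_mul_of_nonneg_left (by exact_mod_cast (Finset.mem_range.1 hi).le) hε.le).trans hεn'
  calc _ ≤ ε * ∑ i ∈ Finset.range n, (1 + ε) ^ i := hbound
    _ ≤ ε * (n • Real.exp 1) := by
        gcongr
        simpa using Finset.sum_le_card_nsmul _ _ _ hterm
    _ = Real.exp 1 * ε * n := by rw [nsmul_eq_mul]; ring

/-- products of univariate approximations of Chebyshev polynomials. -/
theorem mvCheb1Norm_prod_error (n : ℕ) (hn : 1 ≤ n) (ε : ℝ) (hε : 0 < ε)
    (k : Fin n → ℕ) (f : Fin n → Polynomial ℝ)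
    (hf : ∀ i, cheb1Norm (f i - chebT (k i)) ≤ ε) :
    mvCheb1Norm ((∏ i, Polynomial.aeval (MvPolynomial.X i) (f i)) - mvChebT n k) ≤
      ε * ∑ i ∈ Finset.range n, (1 + ε) ^ i ∧
    (ε ≤ 1 / n →
      mvCheb1Norm ((∏ i, Polynomial.aeval (MvPolynomial.X i) (f i)) - mvChebT n k) ≤
        Real.exp 1 * ε * n) :=
  mvCheb1Norm_prod_error_general n ε hε k f hf
end
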